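/- Let 0 < L_b ≤ L_θ ≤ U_θ ≤ U_b < ∞. Then there exists a constant κ ∈ (0, 1), depending only on L_b, U_b, L_θ and U_θ, such that |F(x_b, x_θ) − x_θ| ≤ κ·|x_b − x_θ| for all x_b ∈ [L_b, U_b] and all x_θ ∈ [L_θ, U_θ]. -/

import Mathlib

open MeasureTheory Real Filter

/-- Standard one-dimensional Gaussian pdf. -/
noncomputable def phi1 (x : ℝ) : ℝ := (Real.sqrt (2 * π))⁻¹ * Real.exp (-x ^ 2 / 2)

/-- `w(y, b) = e^{yb}/(e^{yb} + e^{−yb})`. -/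
noncomputable def wgt (y b : ℝ) : ℝ :=
  Real.exp (y * b) / (Real.exp (y * b) + Real.exp (-(y * b)))

/-- `P(x_a, x_b, x_θ) = ∫ w(y − x_a, x_b)·(φ(y − x_θ) + φ(y + x_θ))/2 dy`. -/
noncomputable def Pfun (xa xb xθ : ℝ) : ℝ :=
  ∫ y, wgt (y - xa) xb * ((phi1 (y - xθ) + phi1 (y + xθ)) / 2)

/-- `Γ(x_a, x_b, x_θ) = ∫ w(y − x_a, x_b)·y·(φ(y − x_θ) + φ(y + x_θ))/2 dy`. -/
noncomputable def Gfun (xa xb xθ : ℝ) : ℝ :=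
  ∫ y, wgt (y - xa) xb * y * ((phi1 (y - xθ) + phi1 (y + xθ)) / 2)

/-- `F(x_b, x_θ) = ∫ (2 w(y + x_θ, x_b) − 1)·(y + x_θ)·φ(y) dy`. -/
noncomputable def Ffun (xb xθ : ℝ) : ℝ :=
  ∫ y, (2 * wgt (y + xθ) xb - 1) * (y + xθ) * phi1 y

/-- Standard Gaussian cdf. -/
noncomputable def PhiCdf (x : ℝ) : ℝ := ∫ y in Set.Iic x, phi1 y

/-!
Write `F(b, θ) = E[X tanh(bX)]` with `X ∼ N(θ, 1)`. Pairing `x` with `-x` turns the density into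
`(φ(x - θ) ± φ(x + θ)) / 2 = e^{-θ²/2} φ(x) (cosh | sinh)(θx)`; as `tanh · cosh = sinh`, this
gives `F(θ, θ) = E[X] = θ`. In `b`, `∂_b F = E[X² sech²(bX)] ≥ 0`, and for `0 ≤ θ ≤ b` it is at
most `E[X² sech²(θX)] = e^{-θ²/2} E_{N(0,1)}[X² sech(θX)] ≤ e^{-θ²/2}`. In `θ`,
`∂_θ F = E[ψ(bX)]` with `ψ(u) = tanh u + u sech² u` odd and nonnegative on `[0, ∞)`; after
pairing the integrand is nonnegative, and keeping only `x ∈ [θ, θ + 1]` bounds `∂_θ F` below by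
`ε = slopeLowerBound L_b > 0` once `b, θ ≥ L_b`. Starting from the diagonal, the mean value theorem gives
`0 ≤ F - x_θ ≤ e^{-L_θ²/2} (x_b - x_θ)` when `x_θ ≤ x_b` (moving `b`), and
`0 ≤ x_θ - F ≤ (1 - ε)(x_θ - x_b)` when `x_b ≤ x_θ` (moving `θ`; `F ≤ x_θ` by monotonicity in `b`).
-/

open ProbabilityTheory

lemma abs_le_one_add_sq (x : ℝ) : |x| ≤ 1 + x ^ 2 := by
  nlinarith [sq_abs x, sq_nonneg (|x| - 1)]

namespace Real

theorem hasDerivAt_tanh (x : ℝ) : HasDerivAt tanh (1 / cosh x ^ 2) x := by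
  rw [show tanh = sinh / cosh from funext tanh_eq_sinh_div_cosh]
  rw [← cosh_sq_sub_sinh_sq x]
  exact ((hasDerivAt_sinh x).div (hasDerivAt_cosh x) (cosh_pos x).ne').congr_deriv (by ring)

@[fun_prop]
theorem continuous_tanh : Continuous tanh :=
  continuous_iff_continuousAt.2 fun x => (hasDerivAt_tanh x).continuousAt

theorem tanh_monotone : Monotone tanh :=
  monotone_of_hasDerivAt_nonneg hasDerivAt_tanh fun x => by positivity

theorem tanh_nonneg {x : ℝ} (hx : 0 ≤ x) : 0 ≤ tanh x := by
  simpa using tanh_monotone hx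

theorem tanh_pos {x : ℝ} (hx : 0 < x) : 0 < tanh x := by
  rw [tanh_eq_sinh_div_cosh]
  exact div_pos (sinh_pos_iff.2 hx) (cosh_pos x)

theorem abs_tanh_le_one (x : ℝ) : |tanh x| ≤ 1 := (abs_tanh_lt_one x).le

lemma abs_tanh_mul_le (u v : ℝ) : |tanh u * v| ≤ |v| := by
  rw [abs_mul]
  exact mul_le_of_le_one_left (abs_nonneg v) (abs_tanh_le_one u)

lemma div_cosh_sq_le {v : ℝ} (hv : 0 ≤ v) (u : ℝ) : v / cosh u ^ 2 ≤ v :=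
  div_le_self hv (one_le_pow₀ (one_le_cosh u))

lemma abs_tanh_add_div_cosh_sq_le (u : ℝ) : |tanh u + u / cosh u ^ 2| ≤ 1 + |u| := by
  refine (abs_add_le _ _).trans (add_le_add (abs_tanh_le_one u) ?_)
  rw [abs_div, abs_of_pos (pow_pos (cosh_pos u) 2)]
  exact div_cosh_sq_le (abs_nonneg u) u

lemma tanh_le_tanh_add_div_cosh_sq {u : ℝ} (hu : 0 ≤ u) : tanh u ≤ tanh u + u / cosh u ^ 2 :=
  le_add_of_nonneg_right (by positivity)

end Real

lemma phi1_sub_eq_gaussianPDFReal (x c : ℝ) : phi1 (x - c) = gaussianPDFReal c 1 x := by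
  simp [phi1, gaussianPDFReal]

lemma phi1_pos (x : ℝ) : 0 < phi1 x := by
  simpa [← phi1_sub_eq_gaussianPDFReal] using gaussianPDFReal_pos 0 1 x one_ne_zero

lemma phi1_neg (x : ℝ) : phi1 (-x) = phi1 x := by simp [phi1]

lemma phi1_le_phi1 {x y : ℝ} (h : |x| ≤ |y|) : phi1 y ≤ phi1 x := by
  unfold phi1
  have := sq_le_sq.2 h
  gcongr

lemma phi1_add_eq_phi1_neg_sub (x c : ℝ) : phi1 (x + c) = phi1 (-x - c) := by
  rw [← phi1_neg]
  ring_nf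

lemma phi1_sub_eq_mul_exp (x c : ℝ) :
    phi1 (x - c) = exp (-c ^ 2 / 2) * exp (c * x) * phi1 x := by
  unfold phi1
  rw [show -(x - c) ^ 2 / 2 = -c ^ 2 / 2 + c * x + -x ^ 2 / 2 by ring, exp_add, exp_add]
  ring

lemma phi1_add_eq_exp_mul (x c : ℝ) : phi1 (x + c) = exp (-(2 * c * x)) * phi1 (x - c) := by
  unfold phi1
  rw [show -(x + c) ^ 2 / 2 = -(2 * c * x) + -(x - c) ^ 2 / 2 by ring, exp_add]
  ring

lemma phi1_sub_add_phi1_add (x c : ℝ) :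
    (phi1 (x - c) + phi1 (x + c)) / 2 = exp (-c ^ 2 / 2) * cosh (c * x) * phi1 x := by
  rw [phi1_sub_eq_mul_exp, show x + c = x - -c by ring, phi1_sub_eq_mul_exp, cosh_eq]
  ring_nf

lemma phi1_sub_sub_phi1_add (x c : ℝ) :
    (phi1 (x - c) - phi1 (x + c)) / 2 = exp (-c ^ 2 / 2) * sinh (c * x) * phi1 x := by
  rw [phi1_sub_eq_mul_exp, show x + c = x - -c by ring, phi1_sub_eq_mul_exp, sinh_eq]
  ring_nf

lemma tanh_mul_phi1_sub_add_phi1_add (x c : ℝ) :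
    tanh (x * c) * (phi1 (x - c) + phi1 (x + c)) = phi1 (x - c) - phi1 (x + c) := by
  have hcosh := phi1_sub_add_phi1_add x c
  have hsinh := phi1_sub_sub_phi1_add x c
  rw [tanh_eq_sinh_div_cosh, mul_comm x c, div_mul_eq_mul_div, div_eq_iff (cosh_pos _).ne']
  linear_combination (2 * sinh (c * x)) * hcosh - (2 * cosh (c * x)) * hsinh

lemma phi1_add_le_phi1_sub {x c : ℝ} (hx : 0 ≤ x) (hc : 0 ≤ c) : phi1 (x + c) ≤ phi1 (x - c) :=
  phi1_le_phi1 (by rw [abs_of_nonneg (add_nonneg hx hc), abs_le]; constructor <;> linarith)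

lemma integral_mul_phi1_sub (c : ℝ) : ∫ x, x * phi1 (x - c) = c := by
  simpa [phi1_sub_eq_gaussianPDFReal, integral_gaussianReal_eq_integral_smul, mul_comm] using
    integral_id_gaussianReal (μ := c) (v := 1)

lemma integral_sq_mul_phi1 : ∫ x, x ^ 2 * phi1 x = 1 := by
  have h := variance_eq_sub (memLp_id_gaussianReal (μ := 0) (v := 1) 2)
  simp only [variance_id_gaussianReal, integral_id_gaussianReal, Pi.pow_apply, id] at h
  rw [integral_gaussianReal_eq_integral_smul one_ne_zero] at h
  simp only [← phi1_sub_eq_gaussianPDFReal, sub_zero, smul_eq_mul, mul_comm (phi1 _)] at h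
  norm_num at h
  exact h.symm

@[fun_prop]
lemma continuous_phi1 : Continuous phi1 := by
  unfold phi1
  fun_prop

lemma integrable_phi1 : Integrable phi1 := by
  convert integrable_gaussianPDFReal 0 1
  ext x
  simpa using phi1_sub_eq_gaussianPDFReal x 0

lemma integrable_sq_mul_phi1 : Integrable fun x => x ^ 2 * phi1 x := by
  refine ((integrable_rpow_mul_exp_neg_mul_sq (b := 1 / 2) (by norm_num) (s := 2)
    (by norm_num)).const_mul (√(2 * π))⁻¹).congr (ae_of_all _ fun x => ?_)
  simp only [phi1, rpow_two]
  ring_nf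

lemma integrable_one_add_sq_mul_phi1_sub (c : ℝ) :
    Integrable fun x => (1 + x ^ 2) * phi1 (x - c) := by
  have h := ((integrable_phi1.const_mul (1 + 2 * c ^ 2)).add
    (integrable_sq_mul_phi1.const_mul 2)).comp_sub_right c
  refine h.mono' (by fun_prop) (ae_of_all _ fun x => ?_)
  have := phi1_pos (x - c)
  rw [norm_of_nonneg (by positivity), Pi.add_apply]
  nlinarith [sq_nonneg (x - 2 * c)]

lemma integrable_mul_phi1_sub_of_abs_le {f : ℝ → ℝ} (hf : Continuous f) {C : ℝ}
    (hC : ∀ x, |f x| ≤ C * (1 + x ^ 2)) (c : ℝ) : Integrable fun x => f x * phi1 (x - c) := by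
  refine ((integrable_one_add_sq_mul_phi1_sub c).const_mul C).mono' (by fun_prop)
    (ae_of_all _ fun x => ?_)
  rw [norm_mul, norm_of_nonneg (phi1_pos _).le, ← mul_assoc]
  exact mul_le_mul_of_nonneg_right (hC x) (phi1_pos _).le

lemma MeasureTheory.Integrable.comp_neg_mul_phi1_add {f : ℝ → ℝ} {c : ℝ}
    (hf : Integrable fun x => f x * phi1 (x - c)) :
    Integrable fun x => f (-x) * phi1 (x + c) := by
  simpa only [phi1_add_eq_phi1_neg_sub] using hf.comp_neg

lemma integral_mul_phi1_sub_eq_half {f : ℝ → ℝ} {c : ℝ}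
    (hf : Integrable fun x => f x * phi1 (x - c)) :
    ∫ x, f x * phi1 (x - c) = ∫ x, (f x * phi1 (x - c) + f (-x) * phi1 (x + c)) / 2 := by
  rw [integral_div, integral_add hf hf.comp_neg_mul_phi1_add]
  simp_rw [phi1_add_eq_phi1_neg_sub]
  rw [integral_neg_eq_self (fun x => f x * phi1 (x - c))]
  ring

lemma integral_comp_add_mul_phi1 (f : ℝ → ℝ) (θ : ℝ) :
    ∫ y, f (y + θ) * phi1 y = ∫ x, f x * phi1 (x - θ) := by
  rw [← integral_add_right_eq_self (fun x => f x * phi1 (x - θ)) θ]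
  simp only [add_sub_cancel_right]

lemma hasDerivAt_integral_mul_phi1 {f f' : ℝ → ℝ → ℝ} {s C : ℝ}
    (hf : ∀ t, Continuous (f t)) (hf' : Continuous (f' s))
    (hderiv : ∀ t y, HasDerivAt (fun t => f t y) (f' t y) t)
    (hfs : ∀ y, |f s y| ≤ C * (1 + y ^ 2))
    (hbound : ∀ t ∈ Metric.ball s 1, ∀ y, |f' t y| ≤ C * (1 + y ^ 2)) :
    HasDerivAt (fun t => ∫ y, f t y * phi1 y) (∫ y, f' s y * phi1 y) s := by
  have hint : Integrable fun y => C * ((1 + y ^ 2) * phi1 y) := by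
    simpa using (integrable_one_add_sq_mul_phi1_sub 0).const_mul C
  refine (hasDerivAt_integral_of_dominated_loc_of_deriv_le (Metric.ball_mem_nhds s one_pos)
    (Eventually.of_forall fun t => by fun_prop)
    (by simpa using integrable_mul_phi1_sub_of_abs_le (hf s) hfs 0) (by fun_prop)
    (ae_of_all _ fun y t ht => ?_) hint
    (ae_of_all _ fun y t _ => (hderiv t y).mul_const (phi1 y))).2
  rw [norm_mul, norm_of_nonneg (phi1_pos _).le, ← mul_assoc]
  exact mul_le_mul_of_nonneg_right (hbound t ht y) (phi1_pos _).le

lemma two_mul_wgt_sub_one (y b : ℝ) : 2 * wgt y b - 1 = tanh (y * b) := by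
  rw [wgt, tanh_eq]
  field_simp
  ring

lemma Ffun_eq_integral_comp_add (b θ : ℝ) :
    Ffun b θ = ∫ y, tanh ((y + θ) * b) * (y + θ) * phi1 y := by
  unfold Ffun
  simp_rw [two_mul_wgt_sub_one]

lemma Ffun_eq_integral_mul_phi1_sub (b θ : ℝ) :
    Ffun b θ = ∫ x, tanh (x * b) * x * phi1 (x - θ) :=
  (Ffun_eq_integral_comp_add b θ).trans (integral_comp_add_mul_phi1 (fun x => tanh (x * b) * x) θ)

lemma hasDerivAt_Ffun_left (b θ : ℝ) :
    HasDerivAt (fun b => Ffun b θ) (∫ x, x ^ 2 / cosh (x * b) ^ 2 * phi1 (x - θ)) b := by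
  have hbound : ∀ y, |y + θ| ≤ (2 * θ ^ 2 + 2) * (1 + y ^ 2) ∧
      (y + θ) ^ 2 ≤ (2 * θ ^ 2 + 2) * (1 + y ^ 2) := fun y => by
    constructor <;> nlinarith [sq_abs (y + θ), sq_nonneg (|y + θ| - 1), sq_nonneg (y - θ),
      sq_nonneg (θ * y)]
  have h := hasDerivAt_integral_mul_phi1 (s := b) (C := 2 * θ ^ 2 + 2)
    (f := fun b y => tanh ((y + θ) * b) * (y + θ))
    (f' := fun b y => (y + θ) ^ 2 / cosh ((y + θ) * b) ^ 2)
    (fun t => by fun_prop) (by fun_prop (disch := intro x; positivity))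
    (fun t y => (((hasDerivAt_tanh _).comp t ((hasDerivAt_id t).const_mul (y + θ))).mul_const
      (y + θ)).congr_deriv (by simp; ring))
    (fun y => (abs_tanh_mul_le _ _).trans (hbound y).1)
    (fun t _ y => by
      rw [abs_of_nonneg (by positivity)]
      exact (div_cosh_sq_le (sq_nonneg _) _).trans (hbound y).2)
  simpa only [← Ffun_eq_integral_comp_add,
    integral_comp_add_mul_phi1 (fun x => x ^ 2 / cosh (x * b) ^ 2)] using h

lemma hasDerivAt_Ffun_right (b θ : ℝ) :
    HasDerivAt (fun θ => Ffun b θ)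
      (∫ x, (tanh (x * b) + x * b / cosh (x * b) ^ 2) * phi1 (x - θ)) θ := by
  have hball : ∀ t ∈ Metric.ball θ 1, ∀ y, |y + t| ≤ (|θ| + 2) * (1 + y ^ 2) := by
    intro t ht y
    have ht' : |t| - |θ| < 1 := (abs_sub_abs_le_abs_sub t θ).trans_lt (Metric.mem_ball.1 ht)
    nlinarith [abs_le_one_add_sq y, abs_add_le y t, abs_nonneg θ, sq_nonneg y]
  have hone : ∀ y, 1 ≤ (|θ| + 2) * (1 + y ^ 2) := fun y => by
    nlinarith [abs_nonneg θ, sq_nonneg y]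
  have h := hasDerivAt_integral_mul_phi1 (s := θ) (C := (1 + |b|) * (|θ| + 2))
    (f := fun t y => tanh ((y + t) * b) * (y + t))
    (f' := fun t y => tanh ((y + t) * b) + (y + t) * b / cosh ((y + t) * b) ^ 2)
    (fun t => by fun_prop) (by fun_prop (disch := intro x; positivity))
    (fun t y => (((hasDerivAt_tanh _).comp t (((hasDerivAt_id t).const_add y).mul_const b)).mul
      ((hasDerivAt_id t).const_add y)).congr_deriv (by simp; ring))
    (fun y => by
      have := hball θ (Metric.mem_ball_self one_pos) y
      nlinarith [abs_tanh_mul_le ((y + θ) * b) (y + θ), abs_nonneg b, hone y])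
    (fun t ht y => by
      have := hball t ht y
      have := abs_tanh_add_div_cosh_sq_le ((y + t) * b)
      rw [abs_mul] at this
      nlinarith [abs_nonneg b, abs_nonneg (y + t), hone y])
  simpa only [← Ffun_eq_integral_comp_add,
    integral_comp_add_mul_phi1 (fun x => tanh (x * b) + x * b / cosh (x * b) ^ 2)] using h

lemma integrable_tanh_mul_mul_phi1_sub (b c : ℝ) :
    Integrable fun x => tanh (x * b) * x * phi1 (x - c) :=
  integrable_mul_phi1_sub_of_abs_le (C := 1) (by fun_prop)
    (fun x => (abs_tanh_mul_le _ x).trans (by simpa using abs_le_one_add_sq x)) c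

lemma Ffun_self (θ : ℝ) : Ffun θ θ = θ := by
  have hid : Integrable fun x => x * phi1 (x - θ) :=
    integrable_mul_phi1_sub_of_abs_le (C := 1) continuous_id
      (fun x => by simpa using abs_le_one_add_sq x) θ
  rw [Ffun_eq_integral_mul_phi1_sub, integral_mul_phi1_sub_eq_half
    (integrable_tanh_mul_mul_phi1_sub θ θ)]
  conv_rhs => rw [← integral_mul_phi1_sub θ, integral_mul_phi1_sub_eq_half hid]
  congr 1 with x
  have := tanh_mul_phi1_sub_add_phi1_add x θ
  rw [neg_mul, tanh_neg]
  linear_combination x * this / 2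

lemma Ffun_monotone_left (θ : ℝ) : Monotone fun b => Ffun b θ :=
  monotone_of_hasDerivAt_nonneg (hasDerivAt_Ffun_left · θ) fun b =>
    integral_nonneg fun x => mul_nonneg (by positivity) (phi1_pos _).le

lemma integral_sq_div_cosh_sq_mul_phi1_sub_le {θ s : ℝ} (hθ : 0 ≤ θ) (hs : θ ≤ s) :
    ∫ x, x ^ 2 / cosh (x * s) ^ 2 * phi1 (x - θ) ≤ exp (-θ ^ 2 / 2) := by
  have hint : ∀ t c, Integrable fun x => x ^ 2 / cosh (x * t) ^ 2 * phi1 (x - c) := fun t c =>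
    integrable_mul_phi1_sub_of_abs_le (C := 1) (by fun_prop (disch := intro x; positivity))
      (fun x => by
        rw [abs_of_nonneg (by positivity), one_mul]
        exact (div_cosh_sq_le (sq_nonneg x) _).trans (by linarith)) c
  calc ∫ x, x ^ 2 / cosh (x * s) ^ 2 * phi1 (x - θ)
      ≤ ∫ x, x ^ 2 / cosh (x * θ) ^ 2 * phi1 (x - θ) := by
        refine integral_mono (hint s θ) (hint θ θ) fun x => ?_
        have : |x * θ| ≤ |x * s| := by
          rw [abs_mul, abs_mul, abs_of_nonneg hθ, abs_of_nonneg (hθ.trans hs)]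
          exact mul_le_mul_of_nonneg_left hs (abs_nonneg x)
        exact mul_le_mul_of_nonneg_right (div_le_div_of_nonneg_left (sq_nonneg x) (by positivity)
          (pow_le_pow_left₀ (cosh_pos _).le (cosh_le_cosh.2 this) 2)) (phi1_pos _).le
    _ = ∫ x, exp (-θ ^ 2 / 2) * (x ^ 2 / cosh (θ * x) * phi1 x) := by
        rw [integral_mul_phi1_sub_eq_half (hint θ θ)]
        congr 1 with x
        rw [neg_mul, cosh_neg, neg_sq, mul_comm x θ, ← mul_add, mul_div_assoc,
          phi1_sub_add_phi1_add]
        field_simp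
    _ ≤ ∫ x, exp (-θ ^ 2 / 2) * (x ^ 2 * phi1 x) := by
        have hle : ∀ x, exp (-θ ^ 2 / 2) * (x ^ 2 / cosh (θ * x) * phi1 x)
            ≤ exp (-θ ^ 2 / 2) * (x ^ 2 * phi1 x) := fun x => by
          have := phi1_pos x
          gcongr
          exact div_le_self (sq_nonneg x) (one_le_cosh _)
        have hint_sq := integrable_sq_mul_phi1.const_mul (exp (-θ ^ 2 / 2))
        refine integral_mono (hint_sq.mono' (by fun_prop (disch := intro x; positivity))
          (ae_of_all _ fun x => ?_)) hint_sq hle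
        rw [norm_of_nonneg (mul_nonneg (by positivity) (mul_nonneg (by positivity)
          (phi1_pos x).le))]
        exact hle x
    _ = exp (-θ ^ 2 / 2) := by rw [integral_const_mul, integral_sq_mul_phi1, mul_one]

lemma tanh_add_div_cosh_sq_mul_phi1_sub_sub_nonneg {b s : ℝ} (hb : 0 ≤ b) (hs : 0 ≤ s)
    (x : ℝ) :
    0 ≤ (tanh (x * b) + x * b / cosh (x * b) ^ 2) * (phi1 (x - s) - phi1 (x + s)) := by
  suffices h : ∀ x, 0 ≤ x →
      0 ≤ (tanh (x * b) + x * b / cosh (x * b) ^ 2) * (phi1 (x - s) - phi1 (x + s)) by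
    rcases le_total 0 x with hx | hx
    · exact h x hx
    · have := h (-x) (neg_nonneg.2 hx)
      rw [neg_mul, tanh_neg, cosh_neg, phi1_add_eq_phi1_neg_sub, neg_neg,
        ← phi1_neg (-x - s)] at this
      convert this using 1
      ring_nf
  intro x hx
  exact mul_nonneg
    ((tanh_nonneg (by positivity)).trans (tanh_le_tanh_add_div_cosh_sq (by positivity)))
    (sub_nonneg.2 (phi1_add_le_phi1_sub hx hs))

lemma le_tanh_add_div_cosh_sq_mul_phi1_sub_sub {a b s x : ℝ} (ha : 0 ≤ a) (hb : a ≤ b)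
    (hs : a ≤ s) (hx : x ∈ Set.Icc s (s + 1)) :
    tanh (a ^ 2) * ((1 - exp (-(2 * a ^ 2))) * phi1 1) ≤
      (tanh (x * b) + x * b / cosh (x * b) ^ 2) * (phi1 (x - s) - phi1 (x + s)) := by
  obtain ⟨hsx, hxs⟩ := hx
  have hax : a ^ 2 ≤ x * b := by nlinarith
  have hexp : exp (-(2 * s * x)) ≤ exp (-(2 * a ^ 2)) := exp_le_exp.2 (by nlinarith)
  have hexp_le : exp (-(2 * a ^ 2)) ≤ 1 := exp_le_one_iff.2 (by nlinarith)
  have hphi : phi1 1 ≤ phi1 (x - s) :=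
    phi1_le_phi1 (by rw [abs_of_nonneg (by linarith), abs_one]; linarith)
  rw [phi1_add_eq_exp_mul, ← one_sub_mul]
  exact mul_le_mul
    ((tanh_monotone hax).trans (tanh_le_tanh_add_div_cosh_sq (by nlinarith)))
    (mul_le_mul (by linarith) hphi (phi1_pos 1).le (by linarith))
    (mul_nonneg (by linarith) (phi1_pos 1).le)
    ((tanh_nonneg (by nlinarith)).trans (tanh_le_tanh_add_div_cosh_sq (by nlinarith)))

noncomputable def slopeLowerBound (a : ℝ) : ℝ :=
  tanh (a ^ 2) * ((1 - exp (-(2 * a ^ 2))) * phi1 1) / 2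

lemma slopeLowerBound_pos {a : ℝ} (ha : 0 < a) : 0 < slopeLowerBound a :=
  half_pos (mul_pos (tanh_pos (by positivity))
    (mul_pos (sub_pos.2 (exp_lt_one_iff.2 (by nlinarith))) (phi1_pos 1)))

lemma le_integral_tanh_add_div_cosh_sq_mul_phi1_sub {a b s : ℝ} (ha : 0 ≤ a) (hb : a ≤ b)
    (hs : a ≤ s) :
    slopeLowerBound a ≤ ∫ x, (tanh (x * b) + x * b / cosh (x * b) ^ 2) * phi1 (x - s) := by
  set g : ℝ → ℝ := fun x => tanh (x * b) + x * b / cosh (x * b) ^ 2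
  have hint : Integrable fun x => g x * phi1 (x - s) :=
    integrable_mul_phi1_sub_of_abs_le (C := 1 + |b|) (by fun_prop (disch := intro x; positivity))
      (fun x => by
        have := abs_tanh_add_div_cosh_sq_le (x * b)
        rw [abs_mul] at this
        nlinarith [abs_le_one_add_sq x, abs_nonneg b, abs_nonneg x, sq_nonneg x]) s
  have hsym : ∀ x, (g x * phi1 (x - s) + g (-x) * phi1 (x + s)) / 2
      = g x * (phi1 (x - s) - phi1 (x + s)) / 2 := fun x => by
    simp only [g, neg_mul, tanh_neg, cosh_neg]
    ring
  have hsym_int : Integrable fun x => g x * (phi1 (x - s) - phi1 (x + s)) / 2 := by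
    simpa only [Pi.add_apply, hsym] using (hint.add hint.comp_neg_mul_phi1_add).div_const 2
  rw [integral_mul_phi1_sub_eq_half hint]
  simp_rw [hsym]
  calc _ = volume.real (Set.Icc s (s + 1)) • slopeLowerBound a := by simp
    _ ≤ ∫ x in Set.Icc s (s + 1), g x * (phi1 (x - s) - phi1 (x + s)) / 2 :=
        setIntegral_ge_of_const_le measurableSet_Icc (by simp) (fun x hx =>
          div_le_div_of_nonneg_right (le_tanh_add_div_cosh_sq_mul_phi1_sub_sub ha hb hs hx)
            two_pos.le) hsym_int.integrableOn
    _ ≤ _ := setIntegral_le_integral hsym_int (ae_of_all _ fun x => div_nonneg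
          (tanh_add_div_cosh_sq_mul_phi1_sub_sub_nonneg (ha.trans hb) (ha.trans hs) x) two_pos.le)

lemma Ffun_sub_le {b θ : ℝ} (hθ : 0 ≤ θ) (hb : θ ≤ b) :
    Ffun b θ - θ ≤ exp (-θ ^ 2 / 2) * (b - θ) := by
  have h := (convex_Icc θ b).image_sub_le_mul_sub_of_deriv_le (f := fun b => Ffun b θ)
    (fun t _ => (hasDerivAt_Ffun_left t θ).continuousAt.continuousWithinAt)
    (fun t _ => (hasDerivAt_Ffun_left t θ).differentiableAt.differentiableWithinAt)
    (fun t ht => by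
      rw [interior_Icc] at ht
      rw [(hasDerivAt_Ffun_left t θ).deriv]
      exact integral_sq_div_cosh_sq_mul_phi1_sub_le hθ ht.1.le)
    θ (Set.left_mem_Icc.2 hb) b (Set.right_mem_Icc.2 hb) hb
  simpa only [Ffun_self] using h

lemma Ffun_sub_ge {a b θ : ℝ} (ha : 0 ≤ a) (hb : a ≤ b) (hθ : b ≤ θ) :
    slopeLowerBound a * (θ - b) ≤ Ffun b θ - b := by
  have h := (convex_Icc b θ).mul_sub_le_image_sub_of_le_deriv (f := fun θ => Ffun b θ)
    (fun t _ => (hasDerivAt_Ffun_right b t).continuousAt.continuousWithinAt)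
    (fun t _ => (hasDerivAt_Ffun_right b t).differentiableAt.differentiableWithinAt)
    (fun t ht => by
      rw [interior_Icc] at ht
      rw [(hasDerivAt_Ffun_right b t).deriv]
      exact le_integral_tanh_add_div_cosh_sq_mul_phi1_sub ha hb (hb.trans ht.1.le))
    b (Set.left_mem_Icc.2 hθ) θ (Set.right_mem_Icc.2 hθ) hθ
  simpa only [Ffun_self] using h

theorem stmt19_general (Lb Ub Lθ Uθ : ℝ) (h1 : 0 < Lb) (h2 : Lb ≤ Lθ) :
    ∃ κ : ℝ, 0 < κ ∧ κ < 1 ∧ ∀ xb xθ : ℝ, xb ∈ Set.Icc Lb Ub → xθ ∈ Set.Icc Lθ Uθ →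
      |Ffun xb xθ - xθ| ≤ κ * |xb - xθ| := by
  set ε := slopeLowerBound Lb
  have hε : 0 < ε := slopeLowerBound_pos h1
  have hLθ : 0 < Lθ := h1.trans_le h2
  refine ⟨max (exp (-Lθ ^ 2 / 2)) (1 - ε), (exp_pos _).trans_le (le_max_left _ _),
    max_lt (exp_lt_one_iff.2 (by nlinarith)) (by linarith), ?_⟩
  rintro xb xθ ⟨hxb, -⟩ ⟨hxθ, -⟩
  have hmono := Ffun_monotone_left xθ
  rcases le_total xθ xb with h | h
  · have hF : xθ ≤ Ffun xb xθ := by simpa only [Ffun_self] using hmono h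
    have hexp : exp (-xθ ^ 2 / 2) ≤ exp (-Lθ ^ 2 / 2) := exp_le_exp.2 (by nlinarith)
    rw [abs_of_nonneg (by linarith), abs_of_nonneg (by linarith)]
    calc Ffun xb xθ - xθ ≤ exp (-xθ ^ 2 / 2) * (xb - xθ) := Ffun_sub_le (hLθ.le.trans hxθ) h
      _ ≤ _ := mul_le_mul_of_nonneg_right (hexp.trans (le_max_left _ _)) (by linarith)
  · have hF : Ffun xb xθ ≤ xθ := by simpa only [Ffun_self] using hmono h
    have hgap : ε * (xθ - xb) ≤ Ffun xb xθ - xb := Ffun_sub_ge h1.le hxb h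
    rw [abs_of_nonpos (by linarith), abs_of_nonpos (by linarith)]
    nlinarith [mul_le_mul_of_nonneg_right (le_max_right (exp (-Lθ ^ 2 / 2)) (1 - ε))
      (sub_nonneg.2 h)]

/-- Contraction property of `F`: on the box `[L_b,U_b] × [L_θ,U_θ]` there is `κ ∈ (0,1)`
with `|F(x_b, x_θ) − x_θ| ≤ κ·|x_b − x_θ|`. -/
theorem stmt19 (Lb Ub Lθ Uθ : ℝ) (h1 : 0 < Lb) (h2 : Lb ≤ Lθ) (h3 : Lθ ≤ Uθ)
    (h4 : Uθ ≤ Ub) :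
    ∃ κ : ℝ, 0 < κ ∧ κ < 1 ∧ ∀ xb xθ : ℝ, xb ∈ Set.Icc Lb Ub → xθ ∈ Set.Icc Lθ Uθ →
      |Ffun xb xθ - xθ| ≤ κ * |xb - xθ| :=
  stmt19_general Lb Ub Lθ Uθ h1 h2
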